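/- arXiv:2106.15712 — 2 statements merged into one kernel-verified Lean document; each statement's English description precedes it below -/
import Mathlib

section
/- Let f ∈ L^∞(ℝ^N), K a Borel subset of ℝ^N, and a > 0. Then for a.e. x ∈ ℝ^N, osc(f·1_K, B_a(x)) ≤ osc(f, K ∩ B_a(x))·1_K(x) + 2·(esssup_{K ∩ B_a(x)} |f|)·1_{B_a(K) ∩ B_a(K^c)}(x), where B_a(K) = {x : dist(x,K) < a}. -/
open MeasureTheory Metric

/-- The oscillation of `f` on `C`: essential supremum minus essential infimum of `f` on `C`
with respect to Lebesgue measure. -/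
noncomputable def osc {N : ℕ} (f : EuclideanSpace ℝ (Fin N) → ℝ)
    (C : Set (EuclideanSpace ℝ (Fin N))) : ℝ :=
  essSup f (volume.restrict C) - essInf f (volume.restrict C)

lemma real_limsup_bot {α : Type*} (u : α → ℝ) : Filter.limsup u (⊥ : Filter α) = 0 := by
  have : {a : ℝ | ∀ᶠ b in ⊥, u b ≤ a} = Set.univ := by
    ext a; simp
  simp only [Filter.limsup, Filter.limsSup, Filter.eventually_map] at *
  rw [show {a : ℝ | ∀ᶠ (n : α) in ⊥, u n ≤ a} = Set.univ from this]
  exact Real.sInf_of_not_bddBelow (not_bddBelow_univ)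

lemma real_liminf_bot {α : Type*} (u : α → ℝ) : Filter.liminf u (⊥ : Filter α) = 0 := by
  have : {a : ℝ | ∀ᶠ b in ⊥, a ≤ u b} = Set.univ := by
    ext a; simp
  simp only [Filter.liminf, Filter.limsInf, Filter.eventually_map] at *
  rw [show {a : ℝ | ∀ᶠ (n : α) in ⊥, a ≤ u n} = Set.univ from this]
  exact Real.sSup_of_not_bddAbove (not_bddAbove_univ)

lemma real_essSup_zero {α : Type*} [MeasurableSpace α] (u : α → ℝ) :
    essSup u (0 : Measure α) = 0 := by
  rw [essSup, ae_zero, real_limsup_bot]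

lemma real_essInf_zero {α : Type*} [MeasurableSpace α] (u : α → ℝ) :
    essInf u (0 : Measure α) = 0 := by
  rw [essInf, ae_zero, real_liminf_bot]

theorem osc_indicator_le {N : ℕ} (f : EuclideanSpace ℝ (Fin N) → ℝ)
    (hf : MemLp f ⊤ (volume : Measure (EuclideanSpace ℝ (Fin N))))
    (K : Set (EuclideanSpace ℝ (Fin N))) (hK : MeasurableSet K) (a : ℝ) (ha : 0 < a) :
    ∀ᵐ x ∂(volume : Measure (EuclideanSpace ℝ (Fin N))),
      osc (K.indicator f) (ball x a) ≤
        osc f (K ∩ ball x a) * K.indicator (fun _ => (1 : ℝ)) x +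
          2 * essSup (fun y => |f y|) (volume.restrict (K ∩ ball x a)) *
            (thickening a K ∩ thickening a Kᶜ).indicator (fun _ => (1 : ℝ)) x := by
  -- global a.e. bound on |f|
  obtain ⟨C, hC⟩ : ∃ C : ℝ, ∀ᵐ y ∂(volume : Measure (EuclideanSpace ℝ (Fin N))), |f y| ≤ C := by
    refine ⟨(eLpNormEssSup f volume).toReal, ?_⟩
    have h1 := ae_le_eLpNormEssSup (f := f) (μ := (volume : Measure (EuclideanSpace ℝ (Fin N))))
    have hlt : eLpNormEssSup f volume ≠ ⊤ := by
      have := hf.2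
      rwa [eLpNorm_exponent_top, lt_top_iff_ne_top] at this
    filter_upwards [h1] with y hy
    have := ENNReal.toReal_mono hlt hy
    simpa [Real.norm_eq_abs] using this
  refine Filter.Eventually.of_forall fun x => ?_
  set B : Set (EuclideanSpace ℝ (Fin N)) := ball x a with hB
  set S : Set (EuclideanSpace ℝ (Fin N)) := K ∩ ball x a with hS
  set g : EuclideanSpace ℝ (Fin N) → ℝ := K.indicator f with hg
  have hμB : volume.restrict B ≠ 0 := by
    rw [Ne, Measure.restrict_eq_zero]
    exact (measure_ball_pos volume x ha).ne'
  have : (Filter.NeBot (ae (volume.restrict B))) := ae_neBot.mpr hμB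
  have hCB : ∀ᵐ y ∂(volume.restrict B), |f y| ≤ C := ae_restrict_of_ae hC
  have hCS : ∀ᵐ y ∂(volume.restrict S), |f y| ≤ C := ae_restrict_of_ae hC
  have hgabs : ∀ y, |g y| ≤ |f y| := by
    intro y
    by_cases hy : y ∈ K <;> simp [hg, Set.indicator_of_mem, Set.indicator_of_notMem, hy, abs_nonneg]
  by_cases h1 : x ∈ thickening a K
  · by_cases h2 : x ∈ thickening a Kᶜ
    · -- both thickenings: indicator = 1
      have hind2 : (thickening a K ∩ thickening a Kᶜ).indicator (fun _ => (1:ℝ)) x = 1 :=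
        Set.indicator_of_mem (Set.mem_inter h1 h2) _
      set M : ℝ := essSup (fun y => |f y|) (volume.restrict S) with hM
      have hrr : (volume.restrict B).restrict K = volume.restrict S := by
        rw [Measure.restrict_restrict hK]
      by_cases hS0 : volume.restrict S = 0
      · -- S is null
        have hMz : M = 0 := by rw [hM, hS0, real_essSup_zero]
        have hoscS : osc f S = 0 := by
          rw [osc, hS0, real_essSup_zero, real_essInf_zero, sub_zero]
        have hgz : g =ᵐ[volume.restrict B] (fun _ => (0:ℝ)) := by
          have hnull : (volume.restrict B) K = 0 := by
            have : (volume.restrict B) K = volume (K ∩ B) := by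
              rw [Measure.restrict_apply hK]
            rw [this]
            rwa [Measure.restrict_eq_zero] at hS0
          have : ∀ᵐ y ∂(volume.restrict B), y ∉ K :=
            (ae_iff).mpr (by simpa using hnull)
          filter_upwards [this] with y hy
          simp [hg, Set.indicator_of_notMem hy]
        have hLHS : osc g B = 0 := by
          rw [osc, essSup_congr_ae hgz, essInf_congr_ae hgz,
            essSup_const _ hμB, essInf_const _ hμB, sub_self]
        rw [hLHS, hoscS, hMz, hind2]
        simp
      · -- S has positive measure
        have : (Filter.NeBot (ae (volume.restrict S))) := ae_neBot.mpr hS0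
        have hbddS : Filter.IsBoundedUnder (· ≤ ·) (ae (volume.restrict S))
            (fun y => |f y|) := ⟨C, hCS⟩
        have haeM : ∀ᵐ y ∂(volume.restrict S), |f y| ≤ M := ae_le_essSup hbddS
        have hM0 : 0 ≤ M := by
          have h0 : (0:ℝ) ≤ Filter.liminf (fun y => |f y|) (ae (volume.restrict S)) :=
            Filter.le_liminf_of_le (Filter.isCoboundedUnder_ge_of_eventually_le _ hCS)
              (Filter.Eventually.of_forall fun y => abs_nonneg _)
          exact h0.trans (Filter.liminf_le_limsup hbddS
            (Filter.isBoundedUnder_of ⟨0, fun y => abs_nonneg _⟩))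
        -- transfer M bound to B a.e. on K
        have haeMB : ∀ᵐ y ∂(volume.restrict B), y ∈ K → |f y| ≤ M := by
          rw [← ae_restrict_iff' hK, hrr]; exact haeM
        have hub : ∀ᵐ y ∂(volume.restrict B), g y ≤ M := by
          filter_upwards [haeMB] with y hy
          by_cases hyK : y ∈ K
          · calc g y = f y := Set.indicator_of_mem hyK f
              _ ≤ |f y| := le_abs_self _
              _ ≤ M := hy hyK
          · simp [hg, Set.indicator_of_notMem hyK, hM0]
        have hlb : ∀ᵐ y ∂(volume.restrict B), -M ≤ g y := by
          filter_upwards [haeMB] with y hy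
          by_cases hyK : y ∈ K
          · have : |f y| ≤ M := hy hyK
            have : -M ≤ f y := neg_le_of_abs_le this
            simpa [hg, Set.indicator_of_mem hyK] using this
          · simp [hg, Set.indicator_of_notMem hyK]
            linarith
        have hbddgB : Filter.IsBoundedUnder (· ≥ ·) (ae (volume.restrict B)) g :=
          ⟨-M, hlb⟩
        have hessSup_le : essSup g (volume.restrict B) ≤ M :=
          Filter.limsup_le_of_le hbddgB.isCoboundedUnder_le hub
        have hle_essInf : -M ≤ essInf g (volume.restrict B) :=
          Filter.le_liminf_of_le (Filter.IsBoundedUnder.isCoboundedUnder_ge ⟨M, hub⟩) hlb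
        have hLHS : osc g B ≤ 2 * M := by
          rw [osc]; linarith
        have hoscS : 0 ≤ osc f S := by
          rw [osc, sub_nonneg]
          exact Filter.liminf_le_limsup ⟨C, hCS.mono fun y hy => (le_abs_self _).trans hy⟩
            ⟨-C, hCS.mono fun y hy => neg_le_of_abs_le hy⟩

        have hindK : 0 ≤ K.indicator (fun _ => (1:ℝ)) x := Set.indicator_nonneg (by simp) x
        rw [hind2, mul_one]
        have : 0 ≤ osc f S * K.indicator (fun _ => (1:ℝ)) x := mul_nonneg hoscS hindK
        linarith
    · -- ball ⊆ K
      have hBK : B ⊆ K := by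
        intro y hy
        by_contra hyK
        exact h2 (mem_thickening_iff.mpr ⟨y, hyK, by simpa [dist_comm] using (mem_ball.mp hy)⟩)
      have hxK : x ∈ K := hBK (mem_ball_self ha)
      have hSB : S = B := by
        rw [hS, hB, Set.inter_eq_right.mpr hBK]
      have hgf : g =ᵐ[volume.restrict B] f := by
        refine (ae_restrict_iff' measurableSet_ball).mpr (Filter.Eventually.of_forall ?_)
        intro y hy
        exact Set.indicator_of_mem (hBK hy) f
      have hLHS : osc g B = osc f B := by
        rw [osc, osc, essSup_congr_ae hgf, essInf_congr_ae hgf]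
      have hind2 : (thickening a K ∩ thickening a Kᶜ).indicator (fun _ => (1:ℝ)) x = 0 :=
        Set.indicator_of_notMem (fun h => h2 h.2) _
      rw [hLHS, hSB, hind2, Set.indicator_of_mem hxK]
      simp
  · -- ball ∩ K empty
    have hBK : ∀ y ∈ B, y ∉ K := by
      intro y hy hyK
      exact h1 (mem_thickening_iff.mpr ⟨y, hyK, by simpa [dist_comm] using (mem_ball.mp hy)⟩)
    have hxK : x ∉ K := fun h => h1 (self_subset_thickening ha K h)
    have hgz : g =ᵐ[volume.restrict B] (fun _ => (0:ℝ)) := by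
      refine (ae_restrict_iff' measurableSet_ball).mpr (Filter.Eventually.of_forall ?_)
      intro y hy
      exact Set.indicator_of_notMem (hBK y hy) f
    have hLHS : osc g B = 0 := by
      rw [osc, essSup_congr_ae hgz, essInf_congr_ae hgz,
        essSup_const _ hμB, essInf_const _ hμB, sub_self]
    have hind2 : (thickening a K ∩ thickening a Kᶜ).indicator (fun _ => (1:ℝ)) x = 0 :=
      Set.indicator_of_notMem (fun h => h1 h.1) _
    rw [hLHS, hind2, Set.indicator_of_notMem hxK]
    simp
end

section
/- Let f ∈ L^∞(ℝ^N) and a, b, c > 0 with a + b ≤ c. Then for every x ∈ ℝ^N, esssup_{B_a(x)} f ≤ (1/m(B_b(x))) ∫_{B_b(x)} ( f(z) + osc(f, B_c(z)) ) dz, where m denotes Lebesgue measure. -/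
open MeasureTheory Metric

open Filter

section Aux

variable {N : ℕ} {f : EuclideanSpace ℝ (Fin N) → ℝ} {C : ℝ}

local notation "E" => EuclideanSpace ℝ (Fin N)

lemma aux_bdd_le (hC : ∀ᵐ z ∂(volume : Measure E), |f z| ≤ C) (s : Set E) :
    IsBoundedUnder (· ≤ ·) (ae ((volume : Measure E).restrict s)) f :=
  ⟨C, ae_restrict_of_ae (hC.mono fun _ h => (abs_le.1 h).2)⟩

lemma aux_bdd_ge (hC : ∀ᵐ z ∂(volume : Measure E), |f z| ≤ C) (s : Set E) :
    IsBoundedUnder (· ≥ ·) (ae ((volume : Measure E).restrict s)) f :=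
  ⟨-C, ae_restrict_of_ae (hC.mono fun _ h => (abs_le.1 h).1)⟩

lemma aux_neBot {s : Set E} (hs : (volume : Measure E) s ≠ 0) :
    (ae ((volume : Measure E).restrict s)).NeBot :=
  ae_neBot.mpr (by simpa [Measure.restrict_eq_zero] using hs)

lemma aux_cob_le (hC : ∀ᵐ z ∂(volume : Measure E), |f z| ≤ C) {s : Set E}
    (hs : (volume : Measure E) s ≠ 0) :
    IsCoboundedUnder (· ≤ ·) (ae ((volume : Measure E).restrict s)) f :=
  haveI := aux_neBot hs
  (aux_bdd_ge hC s).isCoboundedUnder_le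

lemma aux_cob_ge (hC : ∀ᵐ z ∂(volume : Measure E), |f z| ≤ C) {s : Set E}
    (hs : (volume : Measure E) s ≠ 0) :
    IsCoboundedUnder (· ≥ ·) (ae ((volume : Measure E).restrict s)) f :=
  haveI := aux_neBot hs
  (aux_bdd_le hC s).isCoboundedUnder_ge

lemma aux_essSup_mono (hC : ∀ᵐ z ∂(volume : Measure E), |f z| ≤ C) {s t : Set E}
    (hst : s ⊆ t) (hs : (volume : Measure E) s ≠ 0) :
    essSup f (volume.restrict s) ≤ essSup f (volume.restrict t) :=
  limsup_le_limsup_of_le (ae_mono (Measure.restrict_mono hst le_rfl))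
    (aux_cob_le hC hs) (aux_bdd_le hC t)

lemma aux_essInf_mono (hC : ∀ᵐ z ∂(volume : Measure E), |f z| ≤ C) {s t : Set E}
    (hst : s ⊆ t) (hs : (volume : Measure E) s ≠ 0) :
    essInf f (volume.restrict t) ≤ essInf f (volume.restrict s) :=
  liminf_le_liminf_of_le (ae_mono (Measure.restrict_mono hst le_rfl))
    (aux_bdd_ge hC t) (aux_cob_ge hC hs)

lemma aux_essSup_le (hC : ∀ᵐ z ∂(volume : Measure E), |f z| ≤ C) {s : Set E}
    (hs : (volume : Measure E) s ≠ 0) :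
    essSup f (volume.restrict s) ≤ C :=
  limsup_le_of_le (aux_cob_le hC hs)
    (ae_restrict_of_ae (hC.mono fun _ h => (abs_le.1 h).2))

lemma aux_le_essInf (hC : ∀ᵐ z ∂(volume : Measure E), |f z| ≤ C) {s : Set E}
    (hs : (volume : Measure E) s ≠ 0) :
    -C ≤ essInf f (volume.restrict s) :=
  le_liminf_of_le (aux_cob_ge hC hs)
    (ae_restrict_of_ae (hC.mono fun _ h => (abs_le.1 h).1))

lemma aux_essInf_le_essSup (hC : ∀ᵐ z ∂(volume : Measure E), |f z| ≤ C) {s : Set E}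
    (hs : (volume : Measure E) s ≠ 0) :
    essInf f (volume.restrict s) ≤ essSup f (volume.restrict s) :=
  haveI := aux_neBot hs
  liminf_le_limsup (aux_bdd_le hC s) (aux_bdd_ge hC s)

lemma aux_exists_nat (c d : ℝ) (hc : 0 < c) (hd : 0 < d) :
    ∃ n : ℕ, c / (n + 2) < d := by
  obtain ⟨n, hn⟩ := exists_nat_gt (c / d)
  refine ⟨n, ?_⟩
  have hn0 : (0:ℝ) ≤ (n:ℝ) := Nat.cast_nonneg n
  have h1 : c < n * d := by
    have := (div_lt_iff₀ hd).1 hn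
    linarith
  rw [div_lt_iff₀ (by positivity)]
  nlinarith [hd.le]

lemma aux_rad_pos {c : ℝ} (hc : 0 < c) (n : ℕ) : 0 < c - c / (n + 2) := by
  have hn0 : (0:ℝ) ≤ (n:ℝ) := Nat.cast_nonneg n
  have h1 : c / (n + 2) < c := div_lt_self hc (by linarith)
  linarith

lemma aux_lsc (hC : ∀ᵐ z ∂(volume : Measure E), |f z| ≤ C) {c : ℝ} (hc : 0 < c) :
    LowerSemicontinuous fun z : E => essSup f (volume.restrict (ball z c)) := by
  intro z t ht
  obtain ⟨r, hr0, hrc, hrt⟩ :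
      ∃ r, 0 < r ∧ r < c ∧ t < essSup f (volume.restrict (ball z r)) := by
    by_contra hcon
    push_neg at hcon
    have key : ∀ᵐ w ∂(volume : Measure E),
        ∀ n : ℕ, w ∈ ball z (c - c / (n + 2)) → f w ≤ t := by
      rw [ae_all_iff]
      intro n
      have hr0 := aux_rad_pos hc n
      have hrlt : c - c / (n + 2) < c := by
        have : 0 < c / ((n:ℝ) + 2) := by positivity
        linarith
      have hb := ae_le_essSup (aux_bdd_le hC (ball z (c - c / (n + 2))))
      exact ae_imp_of_ae_restrict (hb.mono fun w hw => hw.trans (hcon _ hr0 hrlt))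
    have key2 : ∀ᵐ w ∂((volume : Measure E).restrict (ball z c)), f w ≤ t := by
      filter_upwards [ae_restrict_of_ae key, ae_restrict_mem measurableSet_ball]
        with w hw hmem
      rw [mem_ball] at hmem
      obtain ⟨n, hn⟩ := aux_exists_nat c (c - dist w z) hc (by linarith)
      exact hw n (by rw [mem_ball]; linarith)
    exact absurd (limsup_le_of_le (aux_cob_le hC (measure_ball_pos volume z hc).ne') key2)
      (not_le.2 ht)
  filter_upwards [ball_mem_nhds z (sub_pos.2 hrc)] with z' hz'
  refine hrt.trans_le (aux_essSup_mono hC ?_ (measure_ball_pos volume z hr0).ne')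
  intro y hy
  rw [mem_ball] at hy ⊢
  rw [mem_ball, dist_comm] at hz'
  have := dist_triangle y z z'
  linarith

lemma aux_usc (hC : ∀ᵐ z ∂(volume : Measure E), |f z| ≤ C) {c : ℝ} (hc : 0 < c) :
    UpperSemicontinuous fun z : E => essInf f (volume.restrict (ball z c)) := by
  intro z t ht
  obtain ⟨r, hr0, hrc, hrt⟩ :
      ∃ r, 0 < r ∧ r < c ∧ essInf f (volume.restrict (ball z r)) < t := by
    by_contra hcon
    push_neg at hcon
    have key : ∀ᵐ w ∂(volume : Measure E),
        ∀ n : ℕ, w ∈ ball z (c - c / (n + 2)) → t ≤ f w := by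
      rw [ae_all_iff]
      intro n
      have hr0 := aux_rad_pos hc n
      have hrlt : c - c / (n + 2) < c := by
        have : 0 < c / ((n:ℝ) + 2) := by positivity
        linarith
      have hb := ae_essInf_le (aux_bdd_ge hC (ball z (c - c / (n + 2))))
      exact ae_imp_of_ae_restrict (hb.mono fun w hw => le_trans (hcon _ hr0 hrlt) hw)
    have key2 : ∀ᵐ w ∂((volume : Measure E).restrict (ball z c)), t ≤ f w := by
      filter_upwards [ae_restrict_of_ae key, ae_restrict_mem measurableSet_ball]
        with w hw hmem
      rw [mem_ball] at hmem
      obtain ⟨n, hn⟩ := aux_exists_nat c (c - dist w z) hc (by linarith)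
      exact hw n (by rw [mem_ball]; linarith)
    exact absurd (le_liminf_of_le (aux_cob_ge hC (measure_ball_pos volume z hc).ne') key2)
      (not_le.2 ht)
  filter_upwards [ball_mem_nhds z (sub_pos.2 hrc)] with z' hz'
  refine lt_of_le_of_lt (aux_essInf_mono hC ?_ (measure_ball_pos volume z hr0).ne') hrt
  intro y hy
  rw [mem_ball] at hy ⊢
  rw [mem_ball, dist_comm] at hz'
  have := dist_triangle y z z'
  linarith

lemma aux_ae_essInf_le (hC : ∀ᵐ z ∂(volume : Measure E), |f z| ≤ C) {c : ℝ} (hc : 0 < c) :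
    ∀ᵐ z ∂(volume : Measure E), essInf f (volume.restrict (ball z c)) ≤ f z := by
  obtain ⟨D, hDc, hDd⟩ := TopologicalSpace.exists_countable_dense E
  have key : ∀ᵐ w ∂(volume : Measure E), ∀ d ∈ D, ∀ q : ℚ,
      w ∈ ball d (q : ℝ) → essInf f (volume.restrict (ball d (q : ℝ))) ≤ f w := by
    rw [ae_ball_iff hDc]
    intro d _
    rw [ae_all_iff]
    intro q
    rcases le_or_gt (q : ℝ) 0 with hq | hq
    · refine Eventually.of_forall fun w hw => absurd hw ?_
      simp [ball_eq_empty.2 hq]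
    · exact ae_imp_of_ae_restrict (ae_essInf_le (aux_bdd_ge hC _))
  filter_upwards [key] with w hw
  obtain ⟨d, hdD, hdw⟩ := hDd.exists_dist_lt w (by positivity : 0 < c / 4)
  obtain ⟨q, hq1, hq2⟩ := exists_rat_btwn (show c / 4 < c / 2 by linarith)
  have hq0 : 0 < (q : ℝ) := lt_trans (by positivity) hq1
  have hdw' : dist d w < c / 4 := by rw [dist_comm]; exact hdw
  have hwq : w ∈ ball d (q : ℝ) := by rw [mem_ball]; linarith
  have hsub : ball d (q : ℝ) ⊆ ball w c := by
    intro y hy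
    rw [mem_ball] at hy ⊢
    have := dist_triangle y d w
    linarith
  exact le_trans (aux_essInf_mono hC hsub (measure_ball_pos volume d hq0).ne') (hw d hdD q hwq)

end Aux

theorem essSup_ball_le {N : ℕ} (f : EuclideanSpace ℝ (Fin N) → ℝ)
    (hf : MemLp f ⊤ (volume : Measure (EuclideanSpace ℝ (Fin N))))
    (a b c : ℝ) (ha : 0 < a) (hb : 0 < b) (hc : 0 < c) (habc : a + b ≤ c) :
    ∀ x : EuclideanSpace ℝ (Fin N),
      essSup f (volume.restrict (ball x a)) ≤
        ((volume (ball x b)).toReal)⁻¹ *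
          ∫ z in ball x b, (f z + osc f (ball z c)) := by
  obtain ⟨C, hC⟩ : ∃ C : ℝ,
      ∀ᵐ z ∂(volume : Measure (EuclideanSpace ℝ (Fin N))), |f z| ≤ C := by
    have h1 : eLpNormEssSup f volume < ⊤ := by
      have := hf.2
      rwa [eLpNorm_exponent_top] at this
    refine ⟨(eLpNormEssSup f volume).toReal, ?_⟩
    filter_upwards [ae_le_eLpNormEssSup (f := f) (μ := volume)] with z hz
    have := ENNReal.toReal_mono h1.ne hz
    simpa [Real.norm_eq_abs] using this
  intro x
  haveI : IsFiniteMeasure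
      ((volume : Measure (EuclideanSpace ℝ (Fin N))).restrict (ball x b)) :=
    ⟨by rw [Measure.restrict_apply_univ]; exact measure_ball_lt_top⟩
  set g : EuclideanSpace ℝ (Fin N) → ℝ :=
    fun z => essSup f (volume.restrict (ball z c)) with hg
  set h : EuclideanSpace ℝ (Fin N) → ℝ :=
    fun z => essInf f (volume.restrict (ball z c)) with hh
  have hosc : ∀ z, osc f (ball z c) = g z - h z := fun z => rfl
  have hgm : Measurable g := (aux_lsc hC hc).measurable
  have hhm : Measurable h := (aux_usc hC hc).measurable
  have hbnd : ∀ z, ‖g z - h z‖ ≤ C - (-C) := by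
    intro z
    have hpos := (measure_ball_pos volume z hc).ne'
    have h1 : g z ≤ C := aux_essSup_le hC hpos
    have h2 : -C ≤ h z := aux_le_essInf hC hpos
    have h3 : h z ≤ g z := aux_essInf_le_essSup hC hpos
    rw [Real.norm_eq_abs, abs_le]
    constructor <;> linarith
  have hint1 : Integrable f (volume.restrict (ball x b)) :=
    (hf.restrict _).integrable le_top
  have hint2 : Integrable (fun z => osc f (ball z c)) (volume.restrict (ball x b)) := by
    simp only [hosc]
    exact Integrable.mono' (integrable_const (C - (-C)))
      ((hgm.sub hhm).aestronglyMeasurable) (Eventually.of_forall hbnd)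
  have hae : ∀ᵐ z ∂(volume.restrict (ball x b)),
      essSup f (volume.restrict (ball x a)) ≤ f z + osc f (ball z c) := by
    filter_upwards [ae_restrict_of_ae (aux_ae_essInf_le hC hc),
      ae_restrict_mem measurableSet_ball] with z h1 h2
    have hsub : ball x a ⊆ ball z c := by
      intro y hy
      rw [mem_ball] at hy h2 ⊢
      rw [dist_comm] at h2
      have := dist_triangle y x z
      linarith
    have h3 : essSup f (volume.restrict (ball x a)) ≤ g z :=
      aux_essSup_mono hC hsub (measure_ball_pos volume x ha).ne'
    have h1' : h z ≤ f z := h1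
    rw [hosc]
    linarith
  have hInt := integral_mono_ae (integrable_const _) (hint1.add hint2) hae
  rw [integral_const, measureReal_restrict_apply_univ] at hInt
  have hV : (0 : ℝ) < (volume (ball x b)).toReal :=
    ENNReal.toReal_pos (measure_ball_pos volume x hb).ne' measure_ball_lt_top.ne
  rw [inv_mul_eq_div, le_div_iff₀ hV]
  calc essSup f (volume.restrict (ball x a)) * (volume (ball x b)).toReal
      = (volume (ball x b)).toReal • essSup f (volume.restrict (ball x a)) := by
        rw [smul_eq_mul, mul_comm]
    _ ≤ ∫ z in ball x b, (f z + osc f (ball z c)) := hInt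
end
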